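/- Let d ≥ 3 and let λ₁, λ₂, λ₃ ∈ ℂ[X₀,X₁]_1 be pairwise linearly independent linear forms. Then the Waring rank of the binary form P := λ₁^{d−2} λ₂ λ₃ of degree d satisfies rk(P) = d − 1. -/

import Mathlib

/-!
Common definitions: the apolar action of `ℂ[X₀,X₁]` on itself
(`Q • P := Q(∂/∂X₀, ∂/∂X₁)(P)`), the apolar ideal `Ann(P)` and its homogeneous
components, the cokernel `C_P^d` of `Q ↦ Q • P : ℂ[X₀,X₁]_d → ℂ[X₀,X₁]_{l-d}`,
the invariant `d₁(P)` and the Waring rank.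
-/

open MvPolynomial

noncomputable section

/-- The partial derivative `∂/∂Xᵢ` as a `ℂ`-linear endomorphism of `ℂ[X₀,X₁]`. -/
def pd (i : Fin 2) : Module.End ℂ (MvPolynomial (Fin 2) ℂ) := (pderiv (R := ℂ) i).toLinearMap

lemma pd_comm : Commute (pd 0) (pd 1) := by
  apply LinearMap.ext
  intro P
  induction P using MvPolynomial.induction_on' with
  | monomial s a =>
      simp [pd, Module.End.mul_apply, pderiv_monomial]
      rw [tsub_right_comm, mul_right_comm]
  | add p q hp hq => simp_all [Module.End.mul_apply, map_add]

/-- The endomorphism `∂₀^{m 0} ∘ ∂₁^{m 1}` of `ℂ[X₀,X₁]`, as a monoid homomorphism in the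
exponent `m`. -/
def derivMonomialHom :
    Multiplicative (Fin 2 →₀ ℕ) →* Module.End ℂ (MvPolynomial (Fin 2) ℂ) where
  toFun m := pd 0 ^ (Multiplicative.toAdd m 0) * pd 1 ^ (Multiplicative.toAdd m 1)
  map_one' := by simp
  map_mul' a b := by
    simp only [toAdd_mul, Finsupp.add_apply, pow_add]
    exact (Commute.pow_pow pd_comm _ _).mul_mul_mul_comm _ _

/-- The representation of `ℂ[X₀,X₁]` by constant-coefficient differential operators:
`diffOp Q = Q(∂/∂X₀, ∂/∂X₁)`.  It is the morphism of `ℂ`-algebras sending `X i` to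
`∂/∂Xᵢ`. -/
def diffOp : MvPolynomial (Fin 2) ℂ →ₐ[ℂ] Module.End ℂ (MvPolynomial (Fin 2) ℂ) :=
  AddMonoidAlgebra.lift ℂ _ (Fin 2 →₀ ℕ) derivMonomialHom

/-- The apolar action `Q • P := Q(∂/∂X₀, ∂/∂X₁)(P)`. -/
def apolar (Q P : MvPolynomial (Fin 2) ℂ) : MvPolynomial (Fin 2) ℂ := diffOp Q P

/-- For fixed `P`, the map `Q ↦ Q • P` is `ℂ`-linear in `Q`. -/
def apolarLM (P : MvPolynomial (Fin 2) ℂ) :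
    MvPolynomial (Fin 2) ℂ →ₗ[ℂ] MvPolynomial (Fin 2) ℂ :=
  (LinearMap.applyₗ P).comp diffOp.toLinearMap

lemma apolarLM_apply (P Q : MvPolynomial (Fin 2) ℂ) : apolarLM P Q = apolar Q P := rfl

/-- The apolar ideal `Ann(P) = {Q | Q • P = 0}`. -/
def annIdeal (P : MvPolynomial (Fin 2) ℂ) : Ideal (MvPolynomial (Fin 2) ℂ) where
  carrier := {Q | apolar Q P = 0}
  zero_mem' := by simp [apolar]
  add_mem' := by
    intro a b ha hb
    simp only [Set.mem_setOf_eq, apolar, map_add, LinearMap.add_apply] at *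
    rw [ha, hb, add_zero]
  smul_mem' := by
    intro c Q hQ
    simp only [Set.mem_setOf_eq, smul_eq_mul, apolar, map_mul, Module.End.mul_apply] at *
    rw [hQ, map_zero]

/-- The degree-`d` homogeneous component `Ann(P)_d` of the apolar ideal of `P`. -/
def annComp (P : MvPolynomial (Fin 2) ℂ) (d : ℕ) :
    Submodule ℂ (MvPolynomial (Fin 2) ℂ) :=
  homogeneousSubmodule (Fin 2) ℂ d ⊓ LinearMap.ker (apolarLM P)

/-- The image of `ℂ[X₀,X₁]_d` under `Q ↦ Q • P`, viewed as a subspace of `ℂ[X₀,X₁]_{l-d}`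
(for `P` homogeneous of degree `l` and `d ≤ l` the image is indeed contained in
`ℂ[X₀,X₁]_{l-d}`). -/
def apolarImage (P : MvPolynomial (Fin 2) ℂ) (l d : ℕ) :
    Submodule ℂ (homogeneousSubmodule (Fin 2) ℂ (l - d)) :=
  Submodule.comap (homogeneousSubmodule (Fin 2) ℂ (l - d)).subtype
    (Submodule.map (apolarLM P) (homogeneousSubmodule (Fin 2) ℂ d))

/-- `C_P^d`: the cokernel of the `ℂ`-linear map `ℂ[X₀,X₁]_d → ℂ[X₀,X₁]_{l-d}`, `Q ↦ Q • P`. -/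
abbrev ApolarCoker (P : MvPolynomial (Fin 2) ℂ) (l d : ℕ) :=
  (homogeneousSubmodule (Fin 2) ℂ (l - d)) ⧸ apolarImage P l d

/-- `d₁(P)`: the minimal degree of a nonzero homogeneous polynomial in `Ann(P)`. -/
def d1 (P : MvPolynomial (Fin 2) ℂ) : ℕ :=
  sInf {d | ∃ Q : MvPolynomial (Fin 2) ℂ, Q ≠ 0 ∧ Q.IsHomogeneous d ∧ apolar Q P = 0}

/-- The Waring rank of a binary form `P` of degree `l`: the least `r` such that `P` is a sum
of `r` `l`-th powers of linear forms. -/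
def waringRank (l : ℕ) (P : MvPolynomial (Fin 2) ℂ) : ℕ :=
  sInf {r | ∃ lam : Fin r → MvPolynomial (Fin 2) ℂ,
    (∀ i, (lam i).IsHomogeneous 1) ∧ P = ∑ i, lam i ^ l}

end

/-!
A linear change of coordinates preserves Waring rank; it moves `λ₁, λ₂` to `X₀, X₁` and `λ₃` to
`w₀X₀ + w₁X₁` with `w₀w₁ ≠ 0`, so that `P = X₀^{d-2} X₁ (w₀X₀ + w₁X₁)`.

Lower bound (apolarity). If `P` is a sum of `r ≤ d - 2` powers `ℓ^d`, the product `F` of the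
linear forms apolar to the distinct directions of the `ℓ` is a form of degree `≤ d - 2`
annihilating `P`. Comparing the coefficients of `X₀^{d-e-2}X₁²` and `X₀^{d-e-1}X₁` in `F • P`
shows that `X₁² ∣ F`, while `F` has at most one factor proportional to `X₁`.

Upper bound. `∑ cᵢ (tᵢX₀ + X₁)^d = P` as soon as the weighted power sums `Sₖ = ∑ cᵢ tᵢ^k`
are `0, …, 0, w₁/C(d,2), w₀/d, 0` for `k = 0, …, d`. Take for the `d - 1` nodes `tᵢ` the roots of
a separable polynomial `g` whose two subleading coefficients are `-σ, σ²`, `σ = (d-1)w₀/(2w₁)`: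
the first `d - 1` sums are prescribed by solving a Vandermonde system, and the linear recurrence
with characteristic polynomial `g` then produces the last two.
-/

noncomputable section

open Matrix

lemma Finsupp.exists_eq_single_of_degree_eq_one {σ : Type*} {m : σ →₀ ℕ} (h : m.degree = 1) :
    ∃ i, m = Finsupp.single i 1 := by
  obtain ⟨i, hi⟩ : ∃ i, m i ≠ 0 := by
    by_contra! h0
    simp [show m = 0 from Finsupp.ext h0] at h
  have hle : Finsupp.single i 1 ≤ m := by
    simpa [Finsupp.single_le_iff] using Nat.one_le_iff_ne_zero.2 hi
  refine ⟨i, le_antisymm ?_ hle⟩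
  have hrest : (m - Finsupp.single i 1).degree = 0 := by
    have := map_add Finsupp.degree (m - Finsupp.single i 1) (Finsupp.single i 1)
    rw [tsub_add_cancel_of_le hle, h, Finsupp.degree_single] at this
    omega
  rw [Finsupp.degree_eq_zero_iff, tsub_eq_zero_iff_le] at hrest
  exact hrest

namespace MvPolynomial

variable {σ R : Type*} [Fintype σ] [CommRing R]

def linearForm : (σ → R) →ₗ[R] MvPolynomial σ R := Fintype.linearCombination R X

lemma linearForm_apply (v : σ → R) : linearForm v = ∑ i, v i • X i := rfl

lemma isHomogeneous_linearForm (v : σ → R) : (linearForm v).IsHomogeneous 1 :=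
  IsHomogeneous.sum _ _ _ fun i _ => by
    simpa only [smul_eq_C_mul] using isHomogeneous_C_mul_X (v i) i

lemma pderiv_linearForm (v : σ → R) (i : σ) :
    pderiv i (linearForm v) = C (v i) := by
  classical
  simp [linearForm_apply, pderiv_X, Pi.single_apply, smul_eq_C_mul]

lemma isHomogeneous_one_iff {P : MvPolynomial σ R} :
    P.IsHomogeneous 1 ↔ ∃ v, P = linearForm v := by
  classical
  refine ⟨fun hP => ⟨fun i => coeff (Finsupp.single i 1) P, ?_⟩, ?_⟩
  · ext m
    simp only [linearForm_apply, coeff_sum, coeff_smul, coeff_X, smul_eq_mul, mul_ite, mul_one,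
      mul_zero]
    by_cases hm : coeff m P = 0
    · refine hm.trans (Finset.sum_eq_zero fun i _ => ?_).symm
      split_ifs with h <;> simp [h, hm]
    · obtain ⟨j, rfl⟩ := Finsupp.exists_eq_single_of_degree_eq_one
        (Finsupp.degree_eq_weight_one (R := ℕ) ▸ hP hm)
      simp [Finsupp.single_left_inj]
  · rintro ⟨v, rfl⟩
    exact isHomogeneous_linearForm v

def linSubst (A : Matrix σ σ R) : MvPolynomial σ R →ₐ[R] MvPolynomial σ R :=
  aeval fun i => linearForm (A i)

@[simp]
lemma linSubst_X (A : Matrix σ σ R) (i : σ) : linSubst A (X i) = linearForm (A i) :=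
  aeval_X _ _

lemma linSubst_linearForm (A : Matrix σ σ R) (v : σ → R) :
    linSubst A (linearForm v) = linearForm (v ᵥ* A) := by
  simp only [linearForm_apply, map_sum, map_smul, linSubst_X, Finset.smul_sum, smul_smul,
    Matrix.vecMul, dotProduct, Finset.sum_smul]
  exact Finset.sum_comm

lemma linSubst_comp (A B : Matrix σ σ R) : (linSubst B).comp (linSubst A) = linSubst (A * B) :=
  algHom_ext fun i => by
    rw [AlgHom.comp_apply, linSubst_X, linSubst_X, linSubst_linearForm]
    rfl

lemma IsHomogeneous.linSubst {P : MvPolynomial σ R} {n : ℕ} (hP : P.IsHomogeneous n)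
    (A : Matrix σ σ R) : (linSubst A P).IsHomogeneous n := by
  rw [← one_mul n]
  exact hP.aeval _ fun i => isHomogeneous_linearForm (A i)

variable [DecidableEq σ]

lemma linSubst_one : linSubst (1 : Matrix σ σ R) = AlgHom.id R _ :=
  algHom_ext fun i => by simp [linearForm_apply, Matrix.one_apply]

def linSubstEquiv (A : (Matrix σ σ R)ˣ) : MvPolynomial σ R ≃ₐ[R] MvPolynomial σ R :=
  AlgEquiv.ofAlgHom (linSubst A) (linSubst ↑A⁻¹)
    (by rw [linSubst_comp, A.inv_mul, linSubst_one])
    (by rw [linSubst_comp, A.mul_inv, linSubst_one])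

lemma linSubstEquiv_symm_apply (A : (Matrix σ σ R)ˣ) (P : MvPolynomial σ R) :
    (linSubstEquiv A).symm P = linSubst ↑A⁻¹ P := rfl

lemma exists_linSubstEquiv_X_eq {K : Type*} [Field K] {l : σ → MvPolynomial σ K}
    (hl : ∀ i, (l i).IsHomogeneous 1) (hli : LinearIndependent K l) :
    ∃ A : (Matrix σ σ K)ˣ, ∀ i, linSubstEquiv A (X i) = l i := by
  choose v hv using fun i => isHomogeneous_one_iff.1 (hl i)
  have hA : IsUnit (Matrix.of v) := by
    refine Matrix.linearIndependent_rows_iff_isUnit.1 (LinearIndependent.of_comp linearForm ?_)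
    convert hli
    ext1 i
    exact (hv i).symm
  exact ⟨hA.unit, fun i => (linSubst_X _ _).trans (hv i).symm⟩

end MvPolynomial

lemma sum_mul_mul_add_pow {R ι : Type*} [CommSemiring R] (s : Finset ι) (c t : ι → R) (x y : R)
    (d : ℕ) : ∑ i ∈ s, c i * (t i * x + y) ^ d =
      ∑ k ∈ Finset.range (d + 1), (∑ i ∈ s, c i * t i ^ k) * x ^ k * y ^ (d - k) * d.choose k := by
  simp_rw [add_pow, Finset.mul_sum, Finset.sum_mul]
  rw [Finset.sum_comm]
  exact Finset.sum_congr rfl fun k _ => Finset.sum_congr rfl fun i _ => by ring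

lemma exists_sum_mul_pow_eq {K : Type*} [Field K] {n : ℕ} {t : Fin n → K}
    (ht : Function.Injective t) (m : Fin n → K) :
    ∃ c : Fin n → K, ∀ k : Fin n, ∑ i, c i * t i ^ (k : ℕ) = m k := by
  have hV : IsUnit (Matrix.vandermonde t) := by
    rw [Matrix.isUnit_iff_isUnit_det, isUnit_iff_ne_zero]
    exact Matrix.det_vandermonde_ne_zero_iff.2 ht
  obtain ⟨c, hc⟩ := Matrix.vecMul_surjective_iff_isUnit.2 hV m
  exact ⟨c, fun k => by simpa [Matrix.vecMul, dotProduct] using congrFun hc k⟩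

namespace Polynomial

lemma sum_coeff_mul_sum_mul_pow_eq_zero {R ι : Type*} [CommRing R] [Fintype ι] {g : R[X]}
    {t : ι → R} (hg : ∀ i, g.IsRoot (t i)) (c : ι → R) (j : ℕ) :
    ∑ k ∈ Finset.range (g.natDegree + 1), g.coeff k * ∑ i, c i * t i ^ (k + j) = 0 := by
  calc _ = ∑ i, c i * t i ^ j * g.eval (t i) := by
        simp_rw [eval_eq_sum_range, Finset.mul_sum, pow_add]
        rw [Finset.sum_comm]
        exact Finset.sum_congr rfl fun i _ => Finset.sum_congr rfl fun k _ => by ring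
    _ = 0 := Finset.sum_eq_zero fun i _ => by rw [(hg i).eq_zero, mul_zero]

variable {K : Type*} [Field K] [IsAlgClosed K]

lemma separable_iff_forall_eval {g : K[X]} :
    g.Separable ↔ ∀ z, g.eval z ≠ 0 ∨ (derivative g).eval z ≠ 0 := by
  simp [separable_def, isCoprime_iff_aeval_ne_zero_of_isAlgClosed K K,
    Polynomial.coe_aeval_eq_eval]

lemma exists_injective_isRoot {g : K[X]} {n : ℕ} (hg : g.Separable) (hn : g.natDegree = n) :
    ∃ t : Fin n → K, Function.Injective t ∧ ∀ i, g.IsRoot (t i) := by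
  classical
  have hcard : Fintype.card (g.rootSet K) = n := by
    rw [card_rootSet_eq_natDegree hg (IsAlgClosed.splits _), hn]
  let e := Fintype.equivFinOfCardEq hcard
  refine ⟨fun i => e.symm i, Subtype.val_injective.comp e.symm.injective, fun i => ?_⟩
  simpa using (mem_rootSet.1 (e.symm i).2).2

variable [CharZero K]

lemma exists_separable_add_C (p : K[X]) (hp : p.natDegree ≠ 0) : ∃ a, (p + C a).Separable := by
  classical
  obtain ⟨a, ha⟩ := Infinite.exists_notMem_finset
    ((derivative p).roots.toFinset.image fun z => -p.eval z)
  refine ⟨a, separable_iff_forall_eval.2 fun z => or_iff_not_imp_right.2 fun hz hza => ha ?_⟩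
  rw [derivative_add, derivative_C, add_zero, not_not] at hz
  rw [eval_add, eval_C] at hza
  exact Finset.mem_image.2 ⟨z, Multiset.mem_toFinset.2
    ((mem_roots (derivative_ne_zero.2 hp)).2 hz), by linear_combination -hza⟩

lemma exists_separable_coeff (n : ℕ) {σ : K} (hσ : σ ≠ 0) :
    ∃ g : K[X], g.natDegree = n + 2 ∧ g.coeff (n + 2) = 1 ∧ g.coeff (n + 1) = -σ ∧
      g.coeff n = σ ^ 2 ∧ g.Separable := by
  rcases n with _ | n
  · refine ⟨X ^ 2 - C σ * X + C (σ ^ 2), by compute_degree!, ?_, ?_, ?_, ?_⟩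
    iterate 3 simp only [coeff_add, coeff_sub, coeff_X_pow, coeff_C_mul, coeff_X, coeff_C]; norm_num
    -- the discriminant `-3σ²` does not vanish
    refine separable_iff_forall_eval.2 fun z => or_iff_not_imp_right.2 fun hz hgz => hσ ?_
    simp only [not_not, derivative_add, derivative_sub, derivative_X_pow, derivative_C_mul_X,
      derivative_C, eval_add, eval_sub, eval_mul, eval_pow, eval_X, eval_C, eval_zero] at hz hgz
    have hz0 : z = 0 := by
      have : 3 * z ^ 2 = 0 := by linear_combination hgz + (z + σ) * hz
      simpa using this
    subst hz0
    linear_combination -hz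
  · have hp : (X ^ (n + 3) - C σ * X ^ (n + 2) + C (σ ^ 2) * X ^ (n + 1) : K[X]).natDegree =
        n + 3 := by compute_degree!
    obtain ⟨a, ha⟩ := exists_separable_add_C _ (hp.trans_ne (n + 2).succ_ne_zero)
    refine ⟨_, natDegree_add_C.trans hp, ?_, ?_, ?_, ha⟩
    all_goals simp only [coeff_add, coeff_sub, coeff_X_pow, coeff_C_mul, coeff_C]; norm_num

end Polynomial

/- The power sums `S k = ∑ i, c i * t i ^ k` over the roots `t i` of `g` obey the recurrence with
characteristic polynomial `g`; its subleading coefficients `-β/α`, `(β/α)²` make it continue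
`0, …, 0, α` by `β` and then by `0`. -/
lemma exists_weighted_powerSums {K : Type*} [Field K] [IsAlgClosed K] [CharZero K] (n : ℕ)
    {α β : K} (hα : α ≠ 0) (hβ : β ≠ 0) :
    ∃ t c : Fin (n + 2) → K, ∀ k ≤ n + 3,
      ∑ i, c i * t i ^ k = if k = n + 1 then α else if k = n + 2 then β else 0 := by
  obtain ⟨g, hdeg, hgn, hg1, hg2, hsep⟩ := Polynomial.exists_separable_coeff n (div_ne_zero hβ hα)
  obtain ⟨t, ht, hroot⟩ := Polynomial.exists_injective_isRoot hsep hdeg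
  obtain ⟨c, hc⟩ := exists_sum_mul_pow_eq ht fun k => if (k : ℕ) = n + 1 then α else 0
  refine ⟨t, c, ?_⟩
  obtain ⟨S, hS⟩ : ∃ S : ℕ → K, ∀ k, ∑ i, c i * t i ^ k = S k := ⟨_, fun _ => rfl⟩
  have hS0 : ∀ k ≤ n, S k = 0 := fun k hk => by
    rw [← hS, hc ⟨k, by omega⟩, if_neg (by simp; omega)]
  have hS1 : S (n + 1) = α := by rw [← hS, hc ⟨n + 1, by omega⟩, if_pos rfl]
  have hrec : ∀ j ≤ 1,
      g.coeff n * S (n + j) + g.coeff (n + 1) * S (n + 1 + j) + S (n + 2 + j) = 0 := by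
    intro j hj
    have h := Polynomial.sum_coeff_mul_sum_mul_pow_eq_zero hroot c j
    simp only [hS, hdeg, Finset.sum_range_succ, hgn, one_mul] at h
    rwa [Finset.sum_eq_zero fun k hk => by rw [hS0 _ (by simp at hk; omega), mul_zero],
      zero_add] at h
  have hS2 : S (n + 2) = β := by
    have h := hrec 0 zero_le_one
    rw [add_zero, add_zero, add_zero, hS0 n le_rfl, hS1, hg1] at h
    field_simp at h
    linear_combination h
  have hS3 : S (n + 3) = 0 := by
    have h := hrec 1 le_rfl
    rw [hS1, hS2, hg1, hg2] at h
    field_simp at h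
    have : α * S (n + 3) = 0 := by linear_combination h
    exact (mul_eq_zero.1 this).resolve_left hα
  intro k hk
  rw [hS]
  rcases (by omega : k ≤ n ∨ k = n + 1 ∨ k = n + 2 ∨ k = n + 3) with hk | rfl | rfl | rfl
  · rw [hS0 k hk, if_neg (by omega), if_neg (by omega)]
  · simp [hS1]
  · simp [hS2]
  · simp [hS3]

local notation "ℂ[X₀,X₁]" => MvPolynomial (Fin 2) ℂ

def IsSumOfPowers (l r : ℕ) (P : ℂ[X₀,X₁]) : Prop :=
  ∃ lam : Fin r → ℂ[X₀,X₁], (∀ i, (lam i).IsHomogeneous 1) ∧ P = ∑ i, lam i ^ l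

lemma IsSumOfPowers.map_linSubst {l r : ℕ} {P : ℂ[X₀,X₁]} (h : IsSumOfPowers l r P)
    (A : Matrix (Fin 2) (Fin 2) ℂ) : IsSumOfPowers l r (linSubst A P) := by
  obtain ⟨lam, hlam, rfl⟩ := h
  exact ⟨fun i => linSubst A (lam i), fun i => (hlam i).linSubst A, by simp⟩

lemma waringRank_linSubstEquiv (l : ℕ) (A : (Matrix (Fin 2) (Fin 2) ℂ)ˣ) (P : ℂ[X₀,X₁]) :
    waringRank l (linSubstEquiv A P) = waringRank l P := by
  have key : ∀ r, IsSumOfPowers l r (linSubstEquiv A P) ↔ IsSumOfPowers l r P := fun r =>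
    ⟨fun h => by simpa only [← linSubstEquiv_symm_apply, AlgEquiv.symm_apply_apply] using
      h.map_linSubst ↑A⁻¹, fun h => h.map_linSubst A⟩
  exact congrArg sInf (Set.ext key)

lemma waringRank_eq_of_isSumOfPowers {l r : ℕ} {P : ℂ[X₀,X₁]} (h : IsSumOfPowers l r P)
    (hmin : ∀ s < r, ¬ IsSumOfPowers l s P) : waringRank l P = r :=
  le_antisymm (Nat.sInf_le h) (le_csInf ⟨r, h⟩ fun s hs => not_lt.1 fun hsr => hmin s hsr hs)

lemma diffOp_monomial (m : Fin 2 →₀ ℕ) (c : ℂ) :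
    diffOp (monomial m c) = c • (pd 0 ^ m 0 * pd 1 ^ m 1) :=
  AddMonoidAlgebra.lift_single _ _ _

lemma diffOp_X (i : Fin 2) : diffOp (X i) = pd i := by
  fin_cases i <;> simp [X, diffOp_monomial]

lemma apolar_mul (F G P : ℂ[X₀,X₁]) : apolar (F * G) P = apolar F (apolar G P) := by
  simp [apolar]

lemma apolar_linearForm (w : Fin 2 → ℂ) (P : ℂ[X₀,X₁]) :
    apolar (linearForm w) P = ∑ i, w i • pderiv i P := by
  simp [apolar, linearForm_apply, diffOp_X, pd]

lemma apolar_linearForm_pow (w v : Fin 2 → ℂ) (l : ℕ) :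
    apolar (linearForm w) (linearForm v ^ l) = (l * (w ⬝ᵥ v)) • linearForm v ^ (l - 1) := by
  simp only [apolar_linearForm, Derivation.leibniz_pow, pderiv_linearForm, dotProduct,
    Finset.mul_sum, Finset.sum_smul]
  refine Finset.sum_congr rfl fun i _ => ?_
  simp [smul_eq_C_mul]
  ring

lemma pd_pow_monomial (i : Fin 2) (k : ℕ) (m : Fin 2 →₀ ℕ) (c : ℂ) :
    (pd i ^ k) (monomial m c) =
      monomial (m - Finsupp.single i k) ((m i).descFactorial k * c) := by
  induction k with
  | zero => simp
  | succ k ih =>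
    rw [pow_succ', Module.End.mul_apply, ih, pd, Derivation.coeFn_coe, pderiv_monomial,
      Finsupp.tsub_apply, Finsupp.single_eq_same, tsub_tsub, ← Finsupp.single_add,
      Nat.descFactorial_succ]
    push_cast
    ring_nf

lemma apolar_monomial_monomial (m s : Fin 2 →₀ ℕ) (c b : ℂ) :
    apolar (monomial m c) (monomial s b) =
      monomial (s - m) (((s 0).descFactorial (m 0) * (s 1).descFactorial (m 1) : ℕ) * (c * b)) := by
  rw [apolar, diffOp_monomial, LinearMap.smul_apply, Module.End.mul_apply, pd_pow_monomial,
    pd_pow_monomial, smul_monomial, tsub_tsub,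
    show Finsupp.single 1 (m 1) + Finsupp.single 0 (m 0) = m by ext i; fin_cases i <;> simp]
  congr 1
  simp
  ring

def biexp (a b : ℕ) : Fin 2 →₀ ℕ := Finsupp.single 0 a + Finsupp.single 1 b

@[simp]
lemma biexp_apply_zero (a b : ℕ) : biexp a b 0 = a := by simp [biexp]

@[simp]
lemma biexp_apply_one (a b : ℕ) : biexp a b 1 = b := by simp [biexp]

@[simp]
lemma biexp_sub_biexp (p q a b : ℕ) : biexp p q - biexp a b = biexp (p - a) (q - b) := by
  ext i
  fin_cases i <;> simp

lemma eq_biexp (m : Fin 2 →₀ ℕ) : m = biexp (m 0) (m 1) := by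
  ext i
  fin_cases i <;> simp

lemma X_zero_pow_mul_X_one_pow (a b : ℕ) :
    (X 0 ^ a * X 1 ^ b : ℂ[X₀,X₁]) = monomial (biexp a b) 1 := by
  rw [X_pow_eq_monomial, X_pow_eq_monomial, monomial_mul, one_mul, biexp]

lemma MvPolynomial.IsHomogeneous.apply_zero_add_apply_one {F : ℂ[X₀,X₁]} {e : ℕ}
    (hF : F.IsHomogeneous e) {m : Fin 2 →₀ ℕ} (hm : coeff m F ≠ 0) : m 0 + m 1 = e := by
  simpa [Finsupp.weight_apply, Finsupp.sum_fintype, Fin.sum_univ_two] using hF hm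

lemma coeff_apolar_monomial_eq_sum (F : ℂ[X₀,X₁]) (μ τ : Fin 2 →₀ ℕ) (c : ℂ) :
    coeff τ (apolar F (monomial μ c)) = ∑ m ∈ F.support, if μ - m = τ then
      ((μ 0).descFactorial (m 0) * (μ 1).descFactorial (m 1) : ℕ) * (coeff m F * c) else 0 := by
  conv_lhs => rw [F.as_sum]
  simp only [apolar, map_sum, LinearMap.sum_apply, coeff_sum]
  refine Finset.sum_congr rfl fun m _ => ?_
  rw [← apolar, apolar_monomial_monomial, coeff_monomial]

lemma coeff_apolar_monomial {F : ℂ[X₀,X₁]} {e a b p q : ℕ} (hF : F.IsHomogeneous e)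
    (hab : a + b = e) (ha : a ≤ p) (hb : b ≤ q) :
    coeff (biexp (p - a) (q - b)) (apolar F (monomial (biexp p q) 1)) =
      (p.descFactorial a * q.descFactorial b : ℕ) * coeff (biexp a b) F := by
  rw [coeff_apolar_monomial_eq_sum, Finset.sum_eq_single (biexp a b)]
  · simp
  · intro m hm hne
    rw [if_neg]
    intro h
    have h0 := DFunLike.congr_fun h 0
    have h1 := DFunLike.congr_fun h 1
    have hdeg := hF.apply_zero_add_apply_one (mem_support_iff.1 hm)
    simp only [Finsupp.tsub_apply, biexp_apply_zero, biexp_apply_one] at h0 h1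
    exact hne ((eq_biexp m).trans (by congr 1 <;> omega))
  · intro hns
    simp [notMem_support_iff.1 hns]

lemma coeff_apolar_monomial_of_lt (F : ℂ[X₀,X₁]) {a b p q : ℕ} (c : ℂ) (hb : q < b) :
    coeff (biexp a b) (apolar F (monomial (biexp p q) c)) = 0 := by
  rw [coeff_apolar_monomial_eq_sum]
  refine Finset.sum_eq_zero fun m _ => if_neg fun h => ?_
  have h1 := DFunLike.congr_fun h 1
  simp only [Finsupp.tsub_apply, biexp_apply_one] at h1
  omega

lemma MvPolynomial.IsHomogeneous.coeff_biexp_zero_eq_eval {F : ℂ[X₀,X₁]} {e : ℕ}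
    (hF : F.IsHomogeneous e) :
    coeff (biexp e 0) F = eval ![1, 0] F := by
  rw [eval_eq', Finset.sum_eq_single (biexp e 0)]
  · simp [Fin.prod_univ_two]
  · intro m hm hne
    have hdeg := hF.apply_zero_add_apply_one (mem_support_iff.1 hm)
    have h1 : m 1 ≠ 0 := fun h1 => hne ((eq_biexp m).trans (by congr 1; omega))
    simp [Fin.prod_univ_two, h1]
  · intro hns
    simp [notMem_support_iff.1 hns]

/- Points of `ℙ¹` are encoded by `Option ℂ`, with `none ↦ [1 : 0]` and `some t ↦ [t : 1]`, so that
a finset of them lists each direction of linear forms only once. -/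
def dirVec : Option ℂ → Fin 2 → ℂ
  | none => ![1, 0]
  | some t => ![t, 1]

def perpVec : Option ℂ → Fin 2 → ℂ
  | none => ![0, 1]
  | some t => ![1, -t]

lemma perpVec_dotProduct_dirVec (o : Option ℂ) : perpVec o ⬝ᵥ dirVec o = 0 := by
  cases o <;> simp [perpVec, dirVec]

lemma exists_eq_smul_dirVec (v : Fin 2 → ℂ) : ∃ (c : ℂ) (o : Option ℂ), v = c • dirVec o := by
  by_cases h : v 1 = 0
  · exact ⟨v 0, none, by ext i; fin_cases i <;> simp [dirVec, h]⟩
  · exact ⟨v 1, some (v 0 / v 1), by ext i; fin_cases i <;> simp [dirVec, mul_div_cancel₀ _ h]⟩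

lemma isHomogeneous_prod_perpVec (T : Finset (Option ℂ)) :
    (∏ o ∈ T, linearForm (perpVec o)).IsHomogeneous T.card := by
  simpa using IsHomogeneous.prod T _ (fun _ => 1) fun o _ => isHomogeneous_linearForm (perpVec o)

lemma apolar_prod_perpVec_dirVec_pow {T : Finset (Option ℂ)} {o : Option ℂ} (ho : o ∈ T)
    (l : ℕ) : apolar (∏ o ∈ T, linearForm (perpVec o)) (linearForm (dirVec o) ^ l) = 0 := by
  rw [← Finset.prod_erase_mul _ _ ho, apolar_mul, apolar_linearForm_pow,
    perpVec_dotProduct_dirVec, mul_zero, zero_smul, apolar, map_zero]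

lemma IsSumOfPowers.exists_apolar_prod_perpVec_eq_zero {l r : ℕ} {P : ℂ[X₀,X₁]}
    (h : IsSumOfPowers l r P) :
    ∃ T : Finset (Option ℂ), T.card ≤ r ∧ apolar (∏ o ∈ T, linearForm (perpVec o)) P = 0 := by
  classical
  obtain ⟨lam, hlam, rfl⟩ := h
  choose v hv using fun i => isHomogeneous_one_iff.1 (hlam i)
  choose c o hco using fun i => exists_eq_smul_dirVec (v i)
  refine ⟨Finset.univ.image o, Finset.card_image_le.trans (by simp), ?_⟩
  simp only [apolar, map_sum]
  refine Finset.sum_eq_zero fun i _ => ?_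
  rw [hv, hco, map_smul, smul_pow, map_smul, ← apolar,
    apolar_prod_perpVec_dirVec_pow (Finset.mem_image_of_mem o (Finset.mem_univ i)), smul_zero]

lemma coeff_prod_perpVec_of_none_notMem {T : Finset (Option ℂ)} (h : none ∉ T) :
    coeff (biexp T.card 0) (∏ o ∈ T, linearForm (perpVec o)) = 1 := by
  rw [(isHomogeneous_prod_perpVec T).coeff_biexp_zero_eq_eval, map_prod]
  refine Finset.prod_eq_one fun o ho => ?_
  cases o with
  | none => exact absurd ho h
  | some t => simp [perpVec, linearForm_apply]

lemma coeff_prod_perpVec_of_none_mem {T : Finset (Option ℂ)} (h : none ∈ T) :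
    coeff (biexp (T.card - 1) 1) (∏ o ∈ T, linearForm (perpVec o)) = 1 := by
  rw [← Finset.mul_prod_erase _ _ h,
    show linearForm (perpVec none) = X 1 by simp [perpVec, linearForm_apply],
    show biexp (T.card - 1) 1 = Finsupp.single 1 1 + biexp (T.card - 1) 0 by
      ext i; fin_cases i <;> simp,
    coeff_X_mul, ← Finset.card_erase_of_mem h]
  exact coeff_prod_perpVec_of_none_notMem (Finset.notMem_erase _ _)

def reducedForm (d : ℕ) (w : Fin 2 → ℂ) : ℂ[X₀,X₁] := X 0 ^ (d - 2) * X 1 * linearForm w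

lemma reducedForm_add_two (p : ℕ) (w : Fin 2 → ℂ) :
    reducedForm (p + 2) w = w 0 • (X 0 ^ (p + 1) * X 1) + w 1 • (X 0 ^ p * X 1 ^ 2) := by
  simp only [reducedForm, linearForm_apply, Fin.sum_univ_two, smul_eq_C_mul, Nat.add_sub_cancel]
  ring

lemma apolar_reducedForm (F : ℂ[X₀,X₁]) (p : ℕ) (w : Fin 2 → ℂ) :
    apolar F (reducedForm (p + 2) w) = w 0 • apolar F (monomial (biexp (p + 1) 1) 1) +
      w 1 • apolar F (monomial (biexp p 2) 1) := by
  rw [reducedForm_add_two, ← X_zero_pow_mul_X_one_pow, ← X_zero_pow_mul_X_one_pow, pow_one,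
    apolar, map_add, map_smul, map_smul]
  rfl

/- Together with the next lemma: a form of degree `e ≤ d - 2` apolar to `reducedForm d w` is
divisible by `X₁²`. -/
lemma coeff_X0_pow_eq_zero_of_apolar_reducedForm {F : ℂ[X₀,X₁]} {e p : ℕ} {w : Fin 2 → ℂ}
    (hw : w 1 ≠ 0) (hF : F.IsHomogeneous e) (he : e ≤ p)
    (h : apolar F (reducedForm (p + 2) w) = 0) : coeff (biexp e 0) F = 0 := by
  have := congrArg (coeff (biexp (p - e) (2 - 0))) h
  rw [apolar_reducedForm, coeff_add, coeff_smul, coeff_smul,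
    coeff_apolar_monomial_of_lt _ _ (by omega),
    coeff_apolar_monomial hF (add_zero e) he (by omega)] at this
  simpa [hw, Nat.descFactorial_eq_zero_iff_lt, not_lt.2 he] using this

lemma coeff_X0_pow_mul_X1_eq_zero_of_apolar_reducedForm {F : ℂ[X₀,X₁]} {e p : ℕ}
    {w : Fin 2 → ℂ} (hw : w 1 ≠ 0) (hF : F.IsHomogeneous e) (he1 : 1 ≤ e) (he : e ≤ p)
    (h : apolar F (reducedForm (p + 2) w) = 0) : coeff (biexp (e - 1) 1) F = 0 := by
  have := congrArg (coeff (biexp (p - (e - 1)) (2 - 1))) h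
  rw [apolar_reducedForm, coeff_add, coeff_smul, coeff_smul,
    coeff_apolar_monomial (p := p) (q := 2) hF (Nat.sub_add_cancel he1) (by omega) (by norm_num),
    show p - (e - 1) = p + 1 - e by omega, show 2 - 1 = 1 - 0 from rfl,
    coeff_apolar_monomial (p := p + 1) (q := 1) hF (add_zero e) (by omega) zero_le_one,
    coeff_X0_pow_eq_zero_of_apolar_reducedForm hw hF he h] at this
  simpa [hw, Nat.descFactorial_eq_zero_iff_lt, show ¬ p < e - 1 by omega] using this

lemma not_isSumOfPowers_reducedForm {p r : ℕ} {w : Fin 2 → ℂ} (hw : w 1 ≠ 0) (hr : r ≤ p) :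
    ¬ IsSumOfPowers (p + 2) r (reducedForm (p + 2) w) := by
  intro h
  obtain ⟨T, hT, hF⟩ := h.exists_apolar_prod_perpVec_eq_zero
  by_cases hnone : none ∈ T
  · have := coeff_X0_pow_mul_X1_eq_zero_of_apolar_reducedForm hw (isHomogeneous_prod_perpVec T)
      (Finset.card_pos.2 ⟨_, hnone⟩) (by omega) hF
    rw [coeff_prod_perpVec_of_none_mem hnone] at this
    exact one_ne_zero this
  · have := coeff_X0_pow_eq_zero_of_apolar_reducedForm hw (isHomogeneous_prod_perpVec T)
      (by omega) hF
    rw [coeff_prod_perpVec_of_none_notMem hnone] at this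
    exact one_ne_zero this

lemma isSumOfPowers_reducedForm {d : ℕ} (hd : 3 ≤ d) {w : Fin 2 → ℂ} (hw0 : w 0 ≠ 0)
    (hw1 : w 1 ≠ 0) : IsSumOfPowers d (d - 1) (reducedForm d w) := by
  obtain ⟨m, rfl⟩ : ∃ m, d = m + 3 := ⟨d - 3, by omega⟩
  show IsSumOfPowers (m + 3) (m + 2) _
  have hch1 : ((m + 3).choose (m + 1) : ℂ) ≠ 0 := Nat.cast_ne_zero.2 (Nat.choose_pos (by omega)).ne'
  have hch2 : ((m + 3).choose (m + 2) : ℂ) ≠ 0 := Nat.cast_ne_zero.2 (Nat.choose_pos (by omega)).ne'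
  obtain ⟨t, c, hS⟩ := exists_weighted_powerSums m (div_ne_zero hw1 hch1) (div_ne_zero hw0 hch2)
  choose δ hδ using fun i => IsAlgClosed.exists_pow_nat_eq (c i) (by omega : 0 < m + 3)
  refine ⟨fun i => linearForm (δ i • (![t i, 1] : Fin 2 → ℂ)),
    fun i => isHomogeneous_linearForm _, ?_⟩
  have hpow : ∀ i, linearForm (δ i • (![t i, 1] : Fin 2 → ℂ)) ^ (m + 3) =
      C (c i) * (C (t i) * X 0 + X 1) ^ (m + 3) := fun i => by
    rw [map_smul, smul_pow, hδ, smul_eq_C_mul, linearForm_apply, Fin.sum_univ_two]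
    simp [smul_eq_C_mul]
  simp only [hpow]
  rw [sum_mul_mul_add_pow]
  simp only [← map_pow, ← map_mul, ← map_sum]
  rw [Finset.sum_range_succ, Finset.sum_range_succ, Finset.sum_range_succ,
    Finset.sum_eq_zero fun k hk => ?_]
  · have e1 : C (w 1 / (m + 3).choose (m + 1)) * ((m + 3).choose (m + 1) : ℂ[X₀,X₁]) = C (w 1) := by
      rw [← map_natCast C, ← map_mul, div_mul_cancel₀ _ hch1]
    have e2 : C (w 0 / (m + 3).choose (m + 2)) * ((m + 3).choose (m + 2) : ℂ[X₀,X₁]) = C (w 0) := by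
      rw [← map_natCast C, ← map_mul, div_mul_cancel₀ _ hch2]
    rw [hS _ (by omega), hS _ (by omega), hS _ (by omega), if_pos rfl, if_neg (by omega),
      if_pos rfl, if_neg (by omega), if_neg (by omega), map_zero, reducedForm_add_two,
      smul_eq_C_mul, smul_eq_C_mul, show m + 3 - (m + 1) = 2 by omega,
      show m + 3 - (m + 2) = 1 by omega]
    linear_combination -(X 0 ^ (m + 1) * X 1 ^ 2) * e1 - (X 0 ^ (m + 2) * X 1) * e2
  · simp only [Finset.mem_range] at hk
    rw [hS k (by omega), if_neg (by omega), if_neg (by omega), map_zero, zero_mul, zero_mul,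
      zero_mul]

lemma waringRank_reducedForm {d : ℕ} (hd : 3 ≤ d) {w : Fin 2 → ℂ} (hw0 : w 0 ≠ 0)
    (hw1 : w 1 ≠ 0) : waringRank d (reducedForm d w) = d - 1 := by
  refine waringRank_eq_of_isSumOfPowers (isSumOfPowers_reducedForm hd hw0 hw1) fun r hr => ?_
  obtain ⟨p, rfl⟩ : ∃ p, d = p + 2 := ⟨d - 2, by omega⟩
  exact not_isSumOfPowers_reducedForm hw1 (by omega)

lemma ne_zero_of_linearIndependent_map_X_linearForm {M : Type*} [AddCommGroup M] [Module ℂ M]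
    (f : ℂ[X₀,X₁] →ₗ[ℂ] M) {i j : Fin 2} (hij : i ≠ j) {w : Fin 2 → ℂ}
    (h : LinearIndependent ℂ ![f (X i), f (linearForm w)]) : w j ≠ 0 := by
  intro hw
  have hlin : linearForm w = w i • X i := by
    rw [linearForm_apply, Fin.sum_univ_two]
    fin_cases i <;> fin_cases j <;> simp_all
  have := LinearIndependent.pair_iff.1 h (w i) (-1) (by rw [hlin, map_smul]; simp)
  exact one_ne_zero (neg_eq_zero.1 this.2)

end

/-- For `d ≥ 3` and pairwise linearly independent linear forms `λ₁, λ₂, λ₃`, the Waring rank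
of `λ₁^{d−2} λ₂ λ₃` equals `d − 1`. -/
theorem waring_rank_special (d : ℕ) (hd : 3 ≤ d)
    (l1 l2 l3 : MvPolynomial (Fin 2) ℂ)
    (h1 : l1.IsHomogeneous 1) (h2 : l2.IsHomogeneous 1) (h3 : l3.IsHomogeneous 1)
    (h12 : LinearIndependent ℂ ![l1, l2]) (h13 : LinearIndependent ℂ ![l1, l3])
    (h23 : LinearIndependent ℂ ![l2, l3]) :
    waringRank d (l1 ^ (d - 2) * l2 * l3) = d - 1 := by
  obtain ⟨A, hA⟩ := exists_linSubstEquiv_X_eq (l := ![l1, l2]) (Fin.forall_fin_two.2 ⟨h1, h2⟩) h12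
  set e := linSubstEquiv A
  have he0 : e (X 0) = l1 := hA 0
  have he1 : e (X 1) = l2 := hA 1
  obtain ⟨w, hw⟩ := isHomogeneous_one_iff.1 (h3.linSubst ↑A⁻¹)
  have hl3 : e (linearForm w) = l3 := by rw [← hw, ← linSubstEquiv_symm_apply, e.apply_symm_apply]
  have hP : l1 ^ (d - 2) * l2 * l3 = e (reducedForm d w) := by
    rw [reducedForm, map_mul, map_mul, map_pow, he0, he1, hl3]
  rw [hP, waringRank_linSubstEquiv, waringRank_reducedForm hd
    (ne_zero_of_linearIndependent_map_X_linearForm e.toLinearMap (i := 1) (by decide)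
      (by simpa [he1, hl3] using h23))
    (ne_zero_of_linearIndependent_map_X_linearForm e.toLinearMap (i := 0) (by decide)
      (by simpa [he0, hl3] using h13))]
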